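/- Let b ∈ ℝ and let F = F_{−1,b}. Define the exceptional set E ⊆ ℝ² as the union of: {(−(b+2)/5, (2b−1)/5)} if b > 1/2; {(−b, −1)} if b < 0; and the three-point set {((2−b)/5, −(2b+1)/5), ((b−2)/5, (2b+1)/5), ((−3b−4)/5, (4b−3)/5)} if 3/4 < b < 2 (each of these pieces being empty when the corresponding condition on b fails). Then for every (x, y) ∈ Q₂ ∪ Q₄ with (x, y) ∉ E there exists n ∈ ℕ such that F^n(x, y) ∈ Q₁ ∪ Q₃. -/

import Mathlib

/-!
Write `2` and `4` for the open quadrants `Q₂°` and `Q₄°`. On the closed quadrants `Q₂` and `Q₄`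
the map `F = F_{-1,b}` is affine with linear parts `(x, y) ↦ (-x - y, x - y)` and
`(x, y) ↦ (x - y, x + y)`, i.e. multiplication by `-1 + i` and `1 + i` on `ℂ`. An orbit that
never meets `Q₁ ∪ Q₃` has an itinerary in `{2, 4}^ℕ`, and short chains of linear inequalities
forbid certain words in it (`424` always, `22` if `b ≤ 0`, `222` if `b ≤ 1/2`, ...). This forces
the itinerary to be eventually `4^∞` (if `b ≤ 0`), eventually `2^∞` or `(224)^∞` (if `b > 1/2`),
and is contradictory if `0 < b ≤ 1/2`.

Along such a tail a fixed iterate of `F` is the homothety of ratio `-4` or `-64` centred at a fixed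
or `3`-periodic point, since `(-1 + i)⁴ = (1 + i)⁴ = -4` and `((1 + i)(-1 + i)²)⁴ = -64`. Under a
homothety of ratio `< -1` the iterates of any point other than the centre alternate in sign and
grow, so they cannot all stay in one open quadrant: the tail starts at an exceptional point. Finally `F` is injective on each open
quadrant and the exceptional set is closed under preimages in `Q₂° ∪ Q₄°`, so the orbit started
at an exceptional point.
-/

/-- The piecewise linear map `F_{a,b}(x,y) = (|x| - y + a, x - |y| + b)`. -/
noncomputable def F (a b : ℝ) : ℝ × ℝ → ℝ × ℝ :=
  fun p => (|p.1| - p.2 + a, p.1 - |p.2| + b)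

/-- The closed first quadrant. -/
def Q1 : Set (ℝ × ℝ) := {p | 0 ≤ p.1 ∧ 0 ≤ p.2}

/-- The closed second quadrant. -/
def Q2 : Set (ℝ × ℝ) := {p | p.1 ≤ 0 ∧ 0 ≤ p.2}

/-- The closed third quadrant. -/
def Q3 : Set (ℝ × ℝ) := {p | p.1 ≤ 0 ∧ p.2 ≤ 0}

/-- The closed fourth quadrant. -/
def Q4 : Set (ℝ × ℝ) := {p | 0 ≤ p.1 ∧ p.2 ≤ 0}

/-- The exceptional set of Proposition on `F_{-1,b}`: the fixed point in `Q₂`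
(when `b > 1/2`), the fixed point in `Q₄` (when `b < 0`), and the 3-periodic orbit
in `Q₂ ∪ Q₄` (when `3/4 < b < 2`). -/
def ExceptionalSet (b : ℝ) : Set (ℝ × ℝ) :=
  {p | (1/2 < b ∧ p = (-(b+2)/5, (2*b-1)/5)) ∨
       (b < 0 ∧ p = (-b, -1)) ∨
       (3/4 < b ∧ b < 2 ∧
         (p = ((2-b)/5, -(2*b+1)/5) ∨ p = ((b-2)/5, (2*b+1)/5) ∨
          p = ((-3*b-4)/5, (4*b-3)/5)))}

open Set Function

def openQ2 : Set (ℝ × ℝ) := {p | p.1 < 0 ∧ 0 < p.2}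

def openQ4 : Set (ℝ × ℝ) := {p | 0 < p.1 ∧ p.2 < 0}

lemma openQ2_subset_Q2 : openQ2 ⊆ Q2 := fun _ hp => ⟨hp.1.le, hp.2.le⟩

lemma openQ4_subset_Q4 : openQ4 ⊆ Q4 := fun _ hp => ⟨hp.1.le, hp.2.le⟩

lemma mem_openQ2_or_openQ4 {p : ℝ × ℝ} (h : p ∉ Q1 ∪ Q3) : p ∈ openQ2 ∨ p ∈ openQ4 := by
  simp only [Q1, Q3, openQ2, openQ4, mem_union, mem_ofPred_eq, not_or, not_and_or, not_le] at h ⊢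
  rcases h with ⟨h1 | h1, h2 | h2⟩ <;> first | (exfalso; linarith) | tauto

def branchQ2 (b : ℝ) (p : ℝ × ℝ) : ℝ × ℝ := (-p.1 - p.2 - 1, p.1 - p.2 + b)

def branchQ4 (b : ℝ) (p : ℝ × ℝ) : ℝ × ℝ := (p.1 - p.2 - 1, p.1 + p.2 + b)

lemma F_eq_branchQ2 {b : ℝ} {p : ℝ × ℝ} (hp : p ∈ Q2) : F (-1) b p = branchQ2 b p := by
  ext <;> simp only [F, branchQ2, abs_of_nonpos hp.1, abs_of_nonneg hp.2]
  ring

lemma F_eq_branchQ4 {b : ℝ} {p : ℝ × ℝ} (hp : p ∈ Q4) : F (-1) b p = branchQ4 b p := by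
  ext <;> simp only [F, branchQ4, abs_of_nonneg hp.1, abs_of_nonpos hp.2] <;> ring

lemma branchQ2_iterate_four (b : ℝ) (p : ℝ × ℝ) :
    (branchQ2 b)^[4] p - (-(b + 2) / 5, (2 * b - 1) / 5) =
      (-4 : ℝ) • (p - (-(b + 2) / 5, (2 * b - 1) / 5)) := by
  ext <;> simp [branchQ2] <;> ring

lemma branchQ4_iterate_four (b : ℝ) (p : ℝ × ℝ) :
    (branchQ4 b)^[4] p - (-b, -1) = (-4 : ℝ) • (p - (-b, -1)) := by
  ext <;> simp [branchQ4] <;> ring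

lemma branchQ4_comp_branchQ2_comp_branchQ2_iterate_four (b : ℝ) (p : ℝ × ℝ) :
    (branchQ4 b ∘ branchQ2 b ∘ branchQ2 b)^[4] p - ((b - 2) / 5, (2 * b + 1) / 5) =
      (-64 : ℝ) • (p - ((b - 2) / 5, (2 * b + 1) / 5)) := by
  ext <;> simp [branchQ2, branchQ4] <;> ring

lemma eq_iterate_of_succ_eq {α : Type*} {f : α → α} {u : ℕ → α}
    (h : ∀ n, u (n + 1) = f (u n)) (n : ℕ) : u n = f^[n] (u 0) := by
  induction n with
  | zero => rfl
  | succ n ih => rw [h, ih, iterate_succ_apply']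

lemma iterate_sub_eq_pow_smul {R E : Type*} [Ring R] [AddCommGroup E] [Module R E]
    {T : E → E} {a : R} {c : E} (hT : ∀ q, T q - c = a • (q - c)) (p : E) (k : ℕ) :
    T^[k] p - c = a ^ k • (p - c) := by
  induction k with
  | zero => simp
  | succ k ih => rw [iterate_succ_apply', hT, ih, smul_smul, pow_succ']

lemma nonneg_of_forall_le_pow_mul {L e M : ℝ} (hL : 1 < L) (h : ∀ n : ℕ, M ≤ L ^ n * e) :
    0 ≤ e := by
  by_contra! he
  obtain ⟨n, hn⟩ := pow_unbounded_of_one_lt (M / e) hL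
  linarith [h n, (div_lt_iff_of_neg he).1 hn]

lemma eq_zero_of_forall_le_neg_pow_mul {K d M : ℝ} (hK : 1 < K)
    (h : ∀ k : ℕ, M ≤ (-K) ^ k * d) : d = 0 := by
  have hK2 : 1 < K ^ 2 := one_lt_pow₀ hK two_ne_zero
  have heven : 0 ≤ d := nonneg_of_forall_le_pow_mul hK2 fun n => by
    simpa [pow_mul, neg_sq] using h (2 * n)
  have hodd : 0 ≤ K * -d := nonneg_of_forall_le_pow_mul hK2 fun n => by
    convert h (2 * n + 1) using 1
    rw [pow_succ (-K), pow_mul, neg_sq]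
    ring
  linarith [(mul_nonneg_iff_of_pos_left (by linarith : (0 : ℝ) < K)).1 hodd]

lemma eq_zero_of_forall_neg_pow_mul_le {K d M : ℝ} (hK : 1 < K)
    (h : ∀ k : ℕ, (-K) ^ k * d ≤ M) : d = 0 :=
  neg_eq_zero.1 <| eq_zero_of_forall_le_neg_pow_mul hK (M := -M) fun k => by
    linarith [h k, mul_neg ((-K) ^ k) d]

lemma eq_of_forall_iterate_mem_openQ2 {T : ℝ × ℝ → ℝ × ℝ} {K : ℝ} {c p : ℝ × ℝ} (hK : 1 < K)
    (hT : ∀ q, T q - c = -K • (q - c)) (h : ∀ k, T^[k] p ∈ openQ2) : p = c := by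
  have hk := fun k => Prod.ext_iff.1 (iterate_sub_eq_pow_smul hT p k)
  simp only [Prod.fst_sub, Prod.snd_sub, Prod.smul_fst, Prod.smul_snd, smul_eq_mul] at hk
  refine Prod.ext (sub_eq_zero.1 (eq_zero_of_forall_neg_pow_mul_le hK (M := -c.1) fun k => ?_))
    (sub_eq_zero.1 (eq_zero_of_forall_le_neg_pow_mul hK (M := -c.2) fun k => ?_))
  · linarith [(h k).1, (hk k).1]
  · linarith [(h k).2, (hk k).2]

lemma eq_of_forall_iterate_mem_openQ4 {T : ℝ × ℝ → ℝ × ℝ} {K : ℝ} {c p : ℝ × ℝ} (hK : 1 < K)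
    (hT : ∀ q, T q - c = -K • (q - c)) (h : ∀ k, T^[k] p ∈ openQ4) : p = c := by
  have hk := fun k => Prod.ext_iff.1 (iterate_sub_eq_pow_smul hT p k)
  simp only [Prod.fst_sub, Prod.snd_sub, Prod.smul_fst, Prod.smul_snd, smul_eq_mul] at hk
  refine Prod.ext (sub_eq_zero.1 (eq_zero_of_forall_le_neg_pow_mul hK (M := -c.1) fun k => ?_))
    (sub_eq_zero.1 (eq_zero_of_forall_neg_pow_mul_le hK (M := -c.2) fun k => ?_))
  · linarith [(h k).1, (hk k).1]
  · linarith [(h k).2, (hk k).2]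

lemma mem_exceptionalSet_of_F_mem {b : ℝ} {p : ℝ × ℝ} (hp : p ∈ openQ2 ∨ p ∈ openQ4)
    (h : F (-1) b p ∈ ExceptionalSet b) : p ∈ ExceptionalSet b := by
  simp only [ExceptionalSet, mem_ofPred_eq, Prod.ext_iff] at h ⊢
  rcases hp with hp | hp
  · rw [F_eq_branchQ2 (openQ2_subset_Q2 hp)] at h
    obtain ⟨hx, hy⟩ := hp
    simp only [branchQ2] at h
    rcases h with ⟨hb, h1, h2⟩ | ⟨hb, h1, h2⟩ | ⟨hb, hb', ⟨h1, h2⟩ | ⟨h1, h2⟩ | ⟨h1, h2⟩⟩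
    · exact Or.inl ⟨hb, by linarith, by linarith⟩
    · linarith
    · exact Or.inr (Or.inr ⟨hb, hb', Or.inr (Or.inr ⟨by linarith, by linarith⟩)⟩)
    · linarith
    · exact Or.inr (Or.inr ⟨hb, hb', Or.inr (Or.inl ⟨by linarith, by linarith⟩)⟩)
  · rw [F_eq_branchQ4 (openQ4_subset_Q4 hp)] at h
    obtain ⟨hx, hy⟩ := hp
    simp only [branchQ4] at h
    rcases h with ⟨hb, h1, h2⟩ | ⟨hb, h1, h2⟩ | ⟨hb, hb', ⟨h1, h2⟩ | ⟨h1, h2⟩ | ⟨h1, h2⟩⟩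
    · linarith
    · exact Or.inr (Or.inl ⟨hb, by linarith, by linarith⟩)
    · linarith
    · exact Or.inr (Or.inr ⟨hb, hb', Or.inl ⟨by linarith, by linarith⟩⟩)
    · linarith

section Orbit

variable {b : ℝ} {z : ℕ → ℝ × ℝ} (hz : ∀ n, z (n + 1) = F (-1) b (z n))
include hz

lemma succ_eq_branchQ2 {n : ℕ} (h : z n ∈ openQ2) : z (n + 1) = branchQ2 b (z n) :=
  (hz n).trans (F_eq_branchQ2 (openQ2_subset_Q2 h))

lemma succ_eq_branchQ4 {n : ℕ} (h : z n ∈ openQ4) : z (n + 1) = branchQ4 b (z n) :=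
  (hz n).trans (F_eq_branchQ4 (openQ4_subset_Q4 h))

lemma succ_fst_snd_of_mem_openQ2 {n : ℕ} (h : z n ∈ openQ2) :
    (z (n + 1)).1 = -(z n).1 - (z n).2 - 1 ∧ (z (n + 1)).2 = (z n).1 - (z n).2 + b :=
  Prod.ext_iff.1 (succ_eq_branchQ2 hz h)

lemma succ_fst_snd_of_mem_openQ4 {n : ℕ} (h : z n ∈ openQ4) :
    (z (n + 1)).1 = (z n).1 - (z n).2 - 1 ∧ (z (n + 1)).2 = (z n).1 + (z n).2 + b :=
  Prod.ext_iff.1 (succ_eq_branchQ4 hz h)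

variable {n : ℕ}

lemma forbidden_22 (hb : b ≤ 0) (h0 : z n ∈ openQ2) (h1 : z (n + 1) ∈ openQ2) : False := by
  obtain ⟨-, e0⟩ := succ_fst_snd_of_mem_openQ2 hz h0
  linarith [h0.1, h0.2, h1.2]

lemma forbidden_222 (hb : b ≤ 1 / 2) (h0 : z n ∈ openQ2) (h1 : z (n + 1) ∈ openQ2)
    (h2 : z (n + 2) ∈ openQ2) : False := by
  obtain ⟨e0, e0'⟩ := succ_fst_snd_of_mem_openQ2 hz h0
  obtain ⟨e1, e1'⟩ := succ_fst_snd_of_mem_openQ2 hz h1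
  linarith [h0.1, h0.2, h1.1, h1.2, h2.1, h2.2]

lemma forbidden_242 (hb : b ≤ 1 / 2) (h0 : z n ∈ openQ2) (h1 : z (n + 1) ∈ openQ4)
    (h2 : z (n + 2) ∈ openQ2) : False := by
  obtain ⟨e0, e0'⟩ := succ_fst_snd_of_mem_openQ2 hz h0
  obtain ⟨e1, e1'⟩ := succ_fst_snd_of_mem_openQ4 hz h1
  linarith [h0.1, h0.2, h1.1, h1.2, h2.1, h2.2]

lemma forbidden_424 (h0 : z n ∈ openQ4) (h1 : z (n + 1) ∈ openQ2) (h2 : z (n + 2) ∈ openQ4) :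
    False := by
  obtain ⟨e0, e0'⟩ := succ_fst_snd_of_mem_openQ4 hz h0
  obtain ⟨e1, e1'⟩ := succ_fst_snd_of_mem_openQ2 hz h1
  linarith [h0.1, h0.2, h1.1, h1.2, h2.1, h2.2]

lemma forbidden_444 (hb : 1 / 2 ≤ b) (h0 : z n ∈ openQ4) (h1 : z (n + 1) ∈ openQ4)
    (h2 : z (n + 2) ∈ openQ4) : False := by
  obtain ⟨e0, e0'⟩ := succ_fst_snd_of_mem_openQ4 hz h0
  obtain ⟨e1, e1'⟩ := succ_fst_snd_of_mem_openQ4 hz h1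
  linarith [h0.1, h0.2, h1.1, h1.2, h2.1, h2.2]

lemma forbidden_4222 (h0 : z n ∈ openQ4) (h1 : z (n + 1) ∈ openQ2) (h2 : z (n + 2) ∈ openQ2)
    (h3 : z (n + 3) ∈ openQ2) : False := by
  obtain ⟨e0, e0'⟩ := succ_fst_snd_of_mem_openQ4 hz h0
  obtain ⟨e1, e1'⟩ := succ_fst_snd_of_mem_openQ2 hz h1
  obtain ⟨e2, e2'⟩ := succ_fst_snd_of_mem_openQ2 hz h2
  linarith [h0.1, h0.2, h1.1, h1.2, h2.1, h2.2, h3.1, h3.2]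

lemma forbidden_44444 (hb : 0 < b) (h0 : z n ∈ openQ4) (h1 : z (n + 1) ∈ openQ4)
    (h2 : z (n + 2) ∈ openQ4) (h3 : z (n + 3) ∈ openQ4) (h4 : z (n + 4) ∈ openQ4) : False := by
  obtain ⟨e0, e0'⟩ := succ_fst_snd_of_mem_openQ4 hz h0
  obtain ⟨e1, e1'⟩ := succ_fst_snd_of_mem_openQ4 hz h1
  obtain ⟨e2, e2'⟩ := succ_fst_snd_of_mem_openQ4 hz h2
  obtain ⟨e3, e3'⟩ := succ_fst_snd_of_mem_openQ4 hz h3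
  linarith [h0.1, h0.2, h1.1, h1.2, h2.1, h2.2, h3.1, h3.2, h4.1, h4.2]

lemma forbidden_22444 (h0 : z n ∈ openQ2) (h1 : z (n + 1) ∈ openQ2)
    (h2 : z (n + 2) ∈ openQ4) (h3 : z (n + 3) ∈ openQ4) (h4 : z (n + 4) ∈ openQ4) : False := by
  obtain ⟨e0, e0'⟩ := succ_fst_snd_of_mem_openQ2 hz h0
  obtain ⟨e1, e1'⟩ := succ_fst_snd_of_mem_openQ2 hz h1
  obtain ⟨e2, e2'⟩ := succ_fst_snd_of_mem_openQ4 hz h2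
  obtain ⟨e3, e3'⟩ := succ_fst_snd_of_mem_openQ4 hz h3
  linarith [h0.1, h0.2, h1.1, h1.2, h2.1, h2.2, h3.1, h3.2, h4.1, h4.2]

lemma forbidden_224422 (h0 : z n ∈ openQ2) (h1 : z (n + 1) ∈ openQ2) (h2 : z (n + 2) ∈ openQ4)
    (h3 : z (n + 3) ∈ openQ4) (h4 : z (n + 4) ∈ openQ2) (h5 : z (n + 5) ∈ openQ2) : False := by
  obtain ⟨e0, e0'⟩ := succ_fst_snd_of_mem_openQ2 hz h0
  obtain ⟨e1, e1'⟩ := succ_fst_snd_of_mem_openQ2 hz h1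
  obtain ⟨e2, e2'⟩ := succ_fst_snd_of_mem_openQ4 hz h2
  obtain ⟨e3, e3'⟩ := succ_fst_snd_of_mem_openQ4 hz h3
  obtain ⟨e4, e4'⟩ := succ_fst_snd_of_mem_openQ2 hz h4
  linarith [h0.1, h0.2, h1.1, h1.2, h2.1, h2.2, h3.1, h3.2, h4.1, h4.2, h5.1, h5.2]

lemma mem_exceptionalSet_of_tail_openQ4 {N : ℕ} (h : ∀ k, z (N + k) ∈ openQ4) :
    z N ∈ ExceptionalSet b := by
  have hit : ∀ k, z (N + k) = (branchQ4 b)^[k] (z N) :=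
    eq_iterate_of_succ_eq (u := fun k => z (N + k)) fun k => succ_eq_branchQ4 hz (h k)
  have hN : z N = (-b, -1) :=
    eq_of_forall_iterate_mem_openQ4 (by norm_num) (branchQ4_iterate_four b) fun k => by
      rw [← iterate_mul, ← hit]
      exact h _
  have hb : b < 0 := by simpa [hN] using (h 0).1
  exact Or.inr (Or.inl ⟨hb, hN⟩)

lemma mem_exceptionalSet_of_tail_openQ2 {N : ℕ} (h : ∀ k, z (N + k) ∈ openQ2) :
    z N ∈ ExceptionalSet b := by
  have hit : ∀ k, z (N + k) = (branchQ2 b)^[k] (z N) :=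
    eq_iterate_of_succ_eq (u := fun k => z (N + k)) fun k => succ_eq_branchQ2 hz (h k)
  have hN : z N = (-(b + 2) / 5, (2 * b - 1) / 5) :=
    eq_of_forall_iterate_mem_openQ2 (by norm_num) (branchQ2_iterate_four b) fun k => by
      rw [← iterate_mul, ← hit]
      exact h _
  have hb : 0 < (2 * b - 1) / 5 := by simpa [hN] using (h 0).2
  exact Or.inl ⟨by linarith, hN⟩

lemma mem_exceptionalSet_of_tail_224 {N : ℕ}
    (h : ∀ k, z (N + 3 * k) ∈ openQ2 ∧ z (N + 3 * k + 1) ∈ openQ2 ∧ z (N + 3 * k + 2) ∈ openQ4) :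
    z N ∈ ExceptionalSet b := by
  have hstep : ∀ k, z (N + 3 * (k + 1)) = (branchQ4 b ∘ branchQ2 b ∘ branchQ2 b) (z (N + 3 * k)) :=
    fun k => by
      obtain ⟨h0, h1, h2⟩ := h k
      rw [show N + 3 * (k + 1) = N + 3 * k + 2 + 1 by ring, succ_eq_branchQ4 hz h2,
        succ_eq_branchQ2 hz h1, succ_eq_branchQ2 hz h0]
      rfl
  have hit : ∀ k, z (N + 3 * k) = (branchQ4 b ∘ branchQ2 b ∘ branchQ2 b)^[k] (z N) :=
    eq_iterate_of_succ_eq (u := fun k => z (N + 3 * k)) hstep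
  obtain ⟨h0, h1, -⟩ : z N ∈ openQ2 ∧ z (N + 1) ∈ openQ2 ∧ _ := h 0
  have hN : z N = ((b - 2) / 5, (2 * b + 1) / 5) :=
    eq_of_forall_iterate_mem_openQ2 (by norm_num)
      (branchQ4_comp_branchQ2_comp_branchQ2_iterate_four b) fun k => by
        rw [← iterate_mul]
        rw [← hit]
        exact (h _).1
  have hN1 : z (N + 1) = ((-3 * b - 4) / 5, (4 * b - 3) / 5) := by
    rw [succ_eq_branchQ2 hz h0, hN, branchQ2]
    congr 1 <;> ring
  have hb2 : (b - 2) / 5 < 0 := by simpa [hN] using h0.1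
  have hb34 : 0 < (4 * b - 3) / 5 := by simpa [hN1] using h1.2
  exact Or.inr (Or.inr ⟨by linarith, by linarith, Or.inr (Or.inl hN)⟩)

lemma mem_exceptionalSet_zero_of_mem (hQ : ∀ n, z n ∈ openQ2 ∨ z n ∈ openQ4) {N : ℕ}
    (hN : z N ∈ ExceptionalSet b) : z 0 ∈ ExceptionalSet b := by
  induction N with
  | zero => exact hN
  | succ n ih => exact ih (mem_exceptionalSet_of_F_mem (hQ n) (hz n ▸ hN))

section Itinerary

variable (hQ : ∀ n, z n ∈ openQ2 ∨ z n ∈ openQ4)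
include hQ

lemma tail_openQ4_of_nonpos (hb : b ≤ 0) (k : ℕ) : z (1 + k) ∈ openQ4 := by
  rw [add_comm]
  refine (hQ (k + 1)).resolve_left fun h1 => ?_
  exact forbidden_424 hz ((hQ k).resolve_left (forbidden_22 hz hb · h1)) h1
    ((hQ (k + 2)).resolve_left (forbidden_22 hz hb h1))

lemma false_of_pos_of_le_half (hb₀ : 0 < b) (hb : b ≤ 1 / 2) : False := by
  obtain ⟨m, hm⟩ : ∃ m, z m ∈ openQ4 := by
    by_contra! h
    have h2 := fun n => (hQ n).resolve_right (h n)
    exact forbidden_222 hz hb (h2 0) (h2 1) (h2 2)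
  obtain ⟨n, h0, h1⟩ : ∃ n, z n ∈ openQ4 ∧ z (n + 1) ∈ openQ2 := by
    by_contra! h
    have h4 : ∀ k, z (m + k) ∈ openQ4 := fun k => by
      induction k with
      | zero => exact hm
      | succ k ih => exact (hQ _).resolve_left (h _ ih)
    exact forbidden_44444 hz hb₀ (h4 0) (h4 1) (h4 2) (h4 3) (h4 4)
  have h2 := (hQ (n + 2)).resolve_right (forbidden_424 hz h0 h1)
  have h3 := (hQ (n + 3)).resolve_left (forbidden_222 hz hb h1 h2)
  have h4 := (hQ (n + 4)).resolve_left (forbidden_242 hz hb h2 h3)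
  have h5 := (hQ (n + 5)).resolve_right (forbidden_22444 hz h1 h2 h3 h4)
  exact (hQ (n + 6)).elim (forbidden_224422 hz h1 h2 h3 h4 h5) (forbidden_424 hz h4 h5)

lemma exists_224_of_mem_openQ4 (hb : 1 / 2 < b) {m : ℕ} (hm : z m ∈ openQ4) :
    ∃ n, z n ∈ openQ2 ∧ z (n + 1) ∈ openQ2 ∧ z (n + 2) ∈ openQ4 := by
  obtain ⟨n, h0, h1⟩ : ∃ n, z n ∈ openQ4 ∧ z (n + 1) ∈ openQ2 := by
    rcases hQ (m + 1) with h | h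
    · exact ⟨m, hm, h⟩
    · exact ⟨m + 1, h, (hQ (m + 2)).resolve_right (forbidden_444 hz hb.le hm h)⟩
  have h2 := (hQ (n + 2)).resolve_right (forbidden_424 hz h0 h1)
  exact ⟨n + 1, h1, h2, (hQ (n + 3)).resolve_left (forbidden_4222 hz h0 h1 h2)⟩

lemma tail_224_of_224 (hb : 1 / 2 < b) {N : ℕ}
    (h : z N ∈ openQ2 ∧ z (N + 1) ∈ openQ2 ∧ z (N + 2) ∈ openQ4) (k : ℕ) :
    z (N + 3 * k) ∈ openQ2 ∧ z (N + 3 * k + 1) ∈ openQ2 ∧ z (N + 3 * k + 2) ∈ openQ4 := by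
  induction k with
  | zero => exact h
  | succ k ih =>
    obtain ⟨h0, h1, h2⟩ := ih
    have h3 : z (N + 3 * k + 3) ∈ openQ2 := (hQ _).resolve_right fun h3 => by
      have h4 := (hQ _).resolve_right (forbidden_444 hz hb.le h2 h3)
      exact (hQ _).elim (forbidden_224422 hz h0 h1 h2 h3 h4) (forbidden_424 hz h3 h4)
    have h4 := (hQ _).resolve_right (forbidden_424 hz h2 h3)
    exact ⟨h3, h4, (hQ _).resolve_left (forbidden_4222 hz h2 h3 h4)⟩

lemma exists_mem_exceptionalSet : ∃ N, z N ∈ ExceptionalSet b := by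
  rcases le_or_gt b 0 with hb | hb₀
  · exact ⟨1, mem_exceptionalSet_of_tail_openQ4 hz (tail_openQ4_of_nonpos hz hQ hb)⟩
  rcases le_or_gt b (1 / 2) with hb | hb
  · exact (false_of_pos_of_le_half hz hQ hb₀ hb).elim
  by_cases h : ∃ m, z m ∈ openQ4
  · obtain ⟨m, hm⟩ := h
    obtain ⟨N, h224⟩ := exists_224_of_mem_openQ4 hz hQ hb hm
    exact ⟨N, mem_exceptionalSet_of_tail_224 hz (tail_224_of_224 hz hQ hb h224)⟩
  · exact ⟨0, mem_exceptionalSet_of_tail_openQ2 hz fun k =>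
      (hQ _).resolve_right fun hk => h ⟨_, hk⟩⟩

end Itinerary

end Orbit

theorem orbit_meets_Q1_union_Q3_general (b : ℝ) (x : ℝ × ℝ)
    (hE : x ∉ ExceptionalSet b) :
    ∃ n : ℕ, (F (-1) b)^[n] x ∈ Q1 ∪ Q3 := by
  by_contra! h
  have hz : ∀ n, (F (-1) b)^[n + 1] x = F (-1) b ((F (-1) b)^[n] x) :=
    fun n => iterate_succ_apply' _ n x
  have hQ := fun n => mem_openQ2_or_openQ4 (h n)
  obtain ⟨N, hN⟩ := exists_mem_exceptionalSet hz hQ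
  exact hE (mem_exceptionalSet_zero_of_mem hz hQ hN)

/-- For `F = F_{-1,b}`, the orbit of every point of `Q₂ ∪ Q₄` outside the
exceptional set meets `Q₁ ∪ Q₃`. -/
theorem orbit_meets_Q1_union_Q3 (b : ℝ) (x : ℝ × ℝ) (hx : x ∈ Q2 ∪ Q4)
    (hE : x ∉ ExceptionalSet b) :
    ∃ n : ℕ, (F (-1) b)^[n] x ∈ Q1 ∪ Q3 :=
  orbit_meets_Q1_union_Q3_general b x hE
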